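/- arXiv:1508.06437 — 3 statements merged into one kernel-verified Lean document; each statement's English description precedes it below -/
import Mathlib

section
/- If all n colour classes of an edge-coloured graph are identical and each equals a disjoint union of n−1 triangles, then the graph has no rainbow matching of size n. Consequently, for every n ≥ 2 there exist n equivalence relations A_1,…,A_n on a set X, each with kernel of size 3(n−1), admitting no rainbow matching of size n. -/
/-- If all `n` colour classes of an edge-coloured graph are identical and each equals a
disjoint union of `n − 1` triangles, then the graph has no rainbow matching of size `n`.
Consequently, for every `n ≥ 2` there exist `n` equivalence relations `A_1, …, A_n`
on a set `X` (all identical, with all equivalence classes being triangles, i.e. of size 3),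
each with kernel of size `3(n−1)`, admitting no rainbow matching of size `n`. -/
theorem stmt_0 (n : ℕ) (hn : 2 ≤ n) :
    ∃ (X : Type) (_ : Fintype X) (A : Fin n → Setoid X),
      (∀ i j : Fin n, A i = A j) ∧
      (∀ i : Fin n, ∀ x : X, {z : X | (A i).r x z}.ncard = 3) ∧
      (∀ i : Fin n, {x : X | 2 ≤ {z : X | (A i).r x z}.ncard}.ncard = 3 * (n - 1)) ∧
      ¬ ∃ x y : Fin n → X,
          (∀ i : Fin n, (A i).r (x i) (y i)) ∧
          Function.Injective (fun p : Fin n × Bool => if p.2 then x p.1 else y p.1) := by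
  refine ⟨Fin (n - 1) × Fin 3, inferInstance,
    fun _ => Setoid.ker Prod.fst, fun i j => rfl, ?_, ?_, ?_⟩
  · intro i x
    have hset : {z : Fin (n - 1) × Fin 3 | (Setoid.ker Prod.fst).r x z}
        = (fun k : Fin 3 => (x.1, k)) '' Set.univ := by
      ext z
      simp only [Setoid.ker, Set.mem_setOf_eq, Set.image_univ, Set.mem_range,
        Function.onFun]
      constructor
      · intro h
        exact ⟨z.2, Prod.ext h rfl⟩
      · rintro ⟨k, rfl⟩; rfl
    rw [hset, Set.ncard_image_of_injective _ (fun a b h => by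
      simpa using congrArg Prod.snd h), Set.ncard_univ]
    simp
  · intro i
    have hset : {x : Fin (n - 1) × Fin 3 |
        2 ≤ {z : Fin (n - 1) × Fin 3 | (Setoid.ker Prod.fst).r x z}.ncard} = Set.univ := by
      ext x
      simp only [Set.mem_setOf_eq, Set.mem_univ, iff_true]
      have hset2 : {z : Fin (n - 1) × Fin 3 | (Setoid.ker Prod.fst).r x z}
          = (fun k : Fin 3 => (x.1, k)) '' Set.univ := by
        ext z
        simp only [Setoid.ker, Set.mem_setOf_eq, Set.image_univ, Set.mem_range,
          Function.onFun]
        constructor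
        · intro h
          exact ⟨z.2, Prod.ext h rfl⟩
        · rintro ⟨k, rfl⟩; rfl
      rw [hset2, Set.ncard_image_of_injective _ (fun a b h => by
        simpa using congrArg Prod.snd h), Set.ncard_univ]
      simp
    rw [hset, Set.ncard_univ]
    simp [Nat.card_eq_fintype_card, mul_comm]
  · rintro ⟨x, y, hxy, hinj⟩
    -- pigeonhole: two indices i ≠ j with same block for x
    have hcard : Fintype.card (Fin (n - 1)) < Fintype.card (Fin n) := by
      simp; omega
    obtain ⟨i, j, hij, hblock⟩ :=
      Fintype.exists_ne_map_eq_of_card_lt (fun i : Fin n => (x i).1) hcard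
    -- four distinct elements, all with first coordinate (x i).1
    set a := x i; set b := y i; set c := x j; set d := y j
    have h1 : a.1 = b.1 := hxy i
    have h2 : c.1 = d.1 := hxy j
    have h3 : a.1 = c.1 := hblock
    have habc : ∀ p q : Fin n × Bool, p ≠ q →
        (if p.2 then x p.1 else y p.1) ≠ (if q.2 then x q.1 else y q.1) :=
      fun p q hpq h => hpq (hinj h)
    have hab : a ≠ b := by simpa using habc (i, true) (i, false) (by simp)
    have hac : a ≠ c := by simpa using habc (i, true) (j, true) (by simp [hij])
    have had : a ≠ d := by simpa using habc (i, true) (j, false) (by simp)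
    have hbc : b ≠ c := by simpa using habc (i, false) (j, true) (by simp)
    have hbd : b ≠ d := by simpa using habc (i, false) (j, false) (by simp [hij])
    have hcd : c ≠ d := by simpa using habc (j, true) (j, false) (by simp)
    -- second coordinates are four distinct elements of Fin 3
    have key : ∀ u v : Fin (n - 1) × Fin 3, u.1 = a.1 → v.1 = a.1 → u.2 = v.2 → u = v := by
      intro u v hu hv h2'
      exact Prod.ext (hu.trans hv.symm) h2'
    have fa : ∀ u ∈ ({a, b, c, d} : Finset (Fin (n-1) × Fin 3)), u.1 = a.1 := by
      intro u hu
      simp only [Finset.mem_insert, Finset.mem_singleton] at hu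
      rcases hu with rfl | rfl | rfl | rfl
      · rfl
      · exact h1.symm
      · exact h3.symm
      · exact (h3.trans h2).symm
    have hcard4 : ({a, b, c, d} : Finset (Fin (n-1) × Fin 3)).card = 4 := by
      rw [Finset.card_insert_of_notMem (by simp [hab, hac, had]),
        Finset.card_insert_of_notMem (by simp [hbc, hbd]),
        Finset.card_insert_of_notMem (by simp [hcd]), Finset.card_singleton]
    have hle : ({a, b, c, d} : Finset (Fin (n-1) × Fin 3)).card ≤ Fintype.card (Fin 3) := by
      have := Finset.card_le_card_of_injOn (fun u => u.2)
        (fun u _ => Finset.mem_univ _)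
        (fun u hu v hv h => key u v (fa u hu) (fa v hv) h)
      simpa using this
    rw [hcard4] at hle
    simp at hle
end

section
/- Let G be a multigraph edge-coloured with colour set C, let M be a rainbow matching in G, and let σ = (e_0, m_1, e_1, …, e_{k−1}, m_k) be a (c(e_0), c(m_k))-switching with respect to M. Then (M \ {m_1,…,m_k}) ∪ {e_0, e_1, …, e_{k−1}} is again a rainbow matching in G of the same size |M|, and its set of colours is (colours of M) ∪ {c(e_0)} minus {c(m_k)}. -/
/-- Let `G` be a multigraph edge-coloured with colour set `C`, `M` a rainbow matching in `G`,
and `σ = (e_0, m_1, e_1, …, e_{k−1}, m_k)` a `(c(e_0), c(m_k))`-switching with respect to `M`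
(where the colour `c(e_0)` does not appear on `M`). Then `(M \ {m_1,…,m_k}) ∪ {e_0,…,e_{k−1}}`
is again a rainbow matching in `G` of the same size `|M|`, and its set of colours is
`(colours of M) ∪ {c(e_0)}` minus `{c(m_k)}`. Here `m i` denotes `m_{i+1}` and `e i`
denotes `e_i`, for `i < k`. -/
theorem stmt_4 {V E C : Type*} [DecidableEq V] [DecidableEq E] [DecidableEq C]
    (ends : E → Finset V) (hends : ∀ a : E, (ends a).card = 2)
    (col : E → C)
    (M : Finset E)
    (hMdisj : ∀ a ∈ M, ∀ b ∈ M, a ≠ b → Disjoint (ends a) (ends b))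
    (hMrainbow : ∀ a ∈ M, ∀ b ∈ M, a ≠ b → col a ≠ col b)
    (k : ℕ) (hk : 0 < k) (e m : ℕ → E)
    -- the colour `c(e_0)` is missing from the rainbow matching `M`
    (hc0 : ∀ a ∈ M, col a ≠ col (e 0))
    -- (S1) `m_1, …, m_k` are distinct edges of `M`
    (hS1 : ∀ i < k, m i ∈ M)
    (hS1' : ∀ i < k, ∀ j < k, i ≠ j → m i ≠ m j)
    -- (S2) each `e_i` has one endvertex in `m_{i+1}` and the other outside `V(M)`
    (hS2 : ∀ i < k, ∃ u v : V, ends (e i) = {u, v} ∧ u ∈ ends (m i) ∧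
        ∀ a ∈ M, v ∉ ends a)
    -- (S3) `c(e_0) ≠ c(m_i)` for all `i`, and `c(e_i) = c(m_i)` for `1 ≤ i ≤ k−1`
    (hS3 : ∀ i < k, col (e 0) ≠ col (m i))
    (hS3' : ∀ i, 0 < i → i < k → col (e i) = col (m (i - 1)))
    -- (S4) the edges `e_0, …, e_{k−1}` are pairwise vertex-disjoint
    (hS4 : ∀ i < k, ∀ j < k, i ≠ j → Disjoint (ends (e i)) (ends (e j))) :
    (∀ a ∈ (M \ (Finset.range k).image m) ∪ (Finset.range k).image e,
      ∀ b ∈ (M \ (Finset.range k).image m) ∪ (Finset.range k).image e,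
        a ≠ b → Disjoint (ends a) (ends b) ∧ col a ≠ col b) ∧
    ((M \ (Finset.range k).image m) ∪ (Finset.range k).image e).card = M.card ∧
    ((M \ (Finset.range k).image m) ∪ (Finset.range k).image e).image col
      = (M.image col ∪ {col (e 0)}) \ {col (m (k - 1))} := by

  have hk1 : k - 1 < k := Nat.sub_lt hk one_pos
  have heM : ∀ i < k, e i ∉ M := by
    intro i hi hmem
    obtain ⟨u, v, huv, hu, hv⟩ := hS2 i hi
    exact hv (e i) hmem (by rw [huv]; simp)
  have heinj : ∀ i < k, ∀ j < k, i ≠ j → e i ≠ e j := by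
    intro i hi j hj hij heq
    have hd := hS4 i hi j hj hij
    rw [heq, disjoint_self] at hd
    have h2 := hends (e j)
    rw [Finset.bot_eq_empty] at hd
    rw [hd] at h2
    simp at h2
  have hdisjAE : ∀ a ∈ M, a ∉ (Finset.range k).image m → ∀ i < k,
      Disjoint (ends a) (ends (e i)) := by
    intro a haM ham i hi
    obtain ⟨u, v, huv, hu, hv⟩ := hS2 i hi
    have hane : a ≠ m i := by
      intro h; exact ham (Finset.mem_image.mpr ⟨i, Finset.mem_range.mpr hi, h.symm⟩)
    have hd := hMdisj a haM (m i) (hS1 i hi) hane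
    rw [Finset.disjoint_right]
    intro x hx
    rw [huv, Finset.mem_insert, Finset.mem_singleton] at hx
    rcases hx with rfl | rfl
    · exact Finset.disjoint_right.mp hd hu
    · exact hv a haM
  have hcolAE : ∀ a ∈ M, a ∉ (Finset.range k).image m → ∀ i < k,
      col a ≠ col (e i) := by
    intro a haM ham i hi
    rcases Nat.eq_zero_or_pos i with rfl | hpos
    · exact hc0 a haM
    · rw [hS3' i hpos hi]
      have him : i - 1 < k := lt_of_le_of_lt (Nat.sub_le _ _) hi
      have hane : a ≠ m (i - 1) := by
        intro h; exact ham (Finset.mem_image.mpr ⟨i - 1, Finset.mem_range.mpr him, h.symm⟩)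
      exact hMrainbow a haM (m (i - 1)) (hS1 _ him) hane
  have hcolEE : ∀ i < k, ∀ j < k, i ≠ j → col (e i) ≠ col (e j) := by
    intro i hi j hj hij
    rcases Nat.eq_zero_or_pos i with rfl | hposi
    · have hposj : 0 < j := Nat.pos_of_ne_zero (fun h => hij h.symm)
      rw [hS3' j hposj hj]
      exact hS3 (j - 1) (lt_of_le_of_lt (Nat.sub_le _ _) hj)
    · rcases Nat.eq_zero_or_pos j with rfl | hposj
      · rw [hS3' i hposi hi]
        exact (hS3 (i - 1) (lt_of_le_of_lt (Nat.sub_le _ _) hi)).symm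
      · rw [hS3' i hposi hi, hS3' j hposj hj]
        have hi' : i - 1 < k := lt_of_le_of_lt (Nat.sub_le _ _) hi
        have hj' : j - 1 < k := lt_of_le_of_lt (Nat.sub_le _ _) hj
        exact hMrainbow _ (hS1 _ hi') _ (hS1 _ hj')
          (hS1' _ hi' _ hj' (by omega))
  refine ⟨?_, ?_, ?_⟩
  · intro a ha b hb hab
    rw [Finset.mem_union, Finset.mem_sdiff] at ha hb
    rcases ha with ⟨haM, ham⟩ | hae
    · rcases hb with ⟨hbM, hbm⟩ | hbe
      · exact ⟨hMdisj a haM b hbM hab, hMrainbow a haM b hbM hab⟩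
      · obtain ⟨j, hj, rfl⟩ := Finset.mem_image.mp hbe
        rw [Finset.mem_range] at hj
        exact ⟨hdisjAE a haM ham j hj, hcolAE a haM ham j hj⟩
    · obtain ⟨i, hi, rfl⟩ := Finset.mem_image.mp hae
      rw [Finset.mem_range] at hi
      rcases hb with ⟨hbM, hbm⟩ | hbe
      · exact ⟨(hdisjAE b hbM hbm i hi).symm, (hcolAE b hbM hbm i hi).symm⟩
      · obtain ⟨j, hj, rfl⟩ := Finset.mem_image.mp hbe
        rw [Finset.mem_range] at hj
        have hij : i ≠ j := fun h => hab (by rw [h])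
        exact ⟨hS4 i hi j hj hij, hcolEE i hi j hj hij⟩
  · have hcardm : ((Finset.range k).image m).card = k := by
      rw [Finset.card_image_of_injOn, Finset.card_range]
      intro i hi j hj hij
      by_contra h
      exact hS1' i (Finset.mem_range.mp hi) j (Finset.mem_range.mp hj) h hij
    have hcarde : ((Finset.range k).image e).card = k := by
      rw [Finset.card_image_of_injOn, Finset.card_range]
      intro i hi j hj hij
      by_contra h
      exact heinj i (Finset.mem_range.mp hi) j (Finset.mem_range.mp hj) h hij
    have hsub : (Finset.range k).image m ⊆ M := by
      intro x hx
      obtain ⟨i, hi, rfl⟩ := Finset.mem_image.mp hx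
      exact hS1 i (Finset.mem_range.mp hi)
    have hkM : k ≤ M.card := hcardm ▸ Finset.card_le_card hsub
    have hdisjU : Disjoint (M \ (Finset.range k).image m) ((Finset.range k).image e) := by
      rw [Finset.disjoint_right]
      intro x hx hmem
      obtain ⟨i, hi, rfl⟩ := Finset.mem_image.mp hx
      exact heM i (Finset.mem_range.mp hi) (Finset.mem_sdiff.mp hmem).1
    rw [Finset.card_union_of_disjoint hdisjU, Finset.card_sdiff_of_subset hsub, hcardm, hcarde]
    omega
  · ext c
    simp only [Finset.mem_image, Finset.mem_union, Finset.mem_sdiff, Finset.mem_singleton,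
      Finset.mem_range]
    constructor
    · rintro ⟨a, ha | ⟨i, hi, rfl⟩, rfl⟩
      · refine ⟨Or.inl ⟨a, ha.1, rfl⟩, ?_⟩
        have hane : a ≠ m (k - 1) := fun h => ha.2 ⟨k - 1, hk1, h.symm⟩
        exact hMrainbow a ha.1 (m (k - 1)) (hS1 _ hk1) hane
      · rcases Nat.eq_zero_or_pos i with rfl | hpos
        · exact ⟨Or.inr rfl, hS3 (k - 1) hk1⟩
        · rw [hS3' i hpos hi]
          have hi' : i - 1 < k := lt_of_le_of_lt (Nat.sub_le _ _) hi
          refine ⟨Or.inl ⟨m (i - 1), hS1 _ hi', rfl⟩, ?_⟩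
          exact hMrainbow _ (hS1 _ hi') _ (hS1 _ hk1) (hS1' _ hi' _ hk1 (by omega))
    · rintro ⟨⟨a, haM, rfl⟩ | rfl, hne⟩
      · by_cases him : ∃ i, i < k ∧ a = m i
        · obtain ⟨i, hi, rfl⟩ := him
          have hik : i ≠ k - 1 := fun h => hne (by rw [h])
          refine ⟨e (i + 1), Or.inr ⟨i + 1, by omega, rfl⟩, ?_⟩
          rw [hS3' (i + 1) (by omega) (by omega)]
          simp
        · refine ⟨a, Or.inl ⟨haM, ?_⟩, rfl⟩
          rintro ⟨i, hi, rfl⟩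
          exact him ⟨i, hi, rfl⟩
      · exact ⟨e 0, Or.inr ⟨0, hk, rfl⟩, rfl⟩
end

section
/- Let M be a rainbow matching of size n − 1 in an edge-coloured multigraph G, missing colour c_0, let σ be a (c_0, c)-switching with respect to M for some colour c of G, and suppose there exists an edge e of colour c with both endvertices outside V(M) ∪ V(σ). Then G has a rainbow matching of size n, namely (M \ m(σ)) ∪ e(σ) ∪ {e}. -/
/-- Let `M` be a rainbow matching of size `n − 1` in an edge-coloured multigraph `G`,
missing colour `c₀`, let `σ = (e_0, m_1, …, e_{k−1}, m_k)` be a `(c₀, c)`-switching with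
respect to `M` for some colour `c` of `G` (the empty switching, `k = 0`, has `c = c₀`),
and suppose there exists an edge `ed` of colour `c` with both endvertices outside
`V(M) ∪ V(σ)`. Then `G` has a rainbow matching of size `n`, namely
`(M \ m(σ)) ∪ e(σ) ∪ {ed}`. Here `m i` denotes `m_{i+1}` and `e i` denotes `e_i`. -/
theorem stmt_16 {V E : Type*} [DecidableEq V] [DecidableEq E]
    (n : ℕ) (hn : 1 ≤ n)
    (ends : E → Finset V) (hends : ∀ a : E, (ends a).card = 2)
    (col : E → Fin n)
    (M : Finset E) (hMcard : M.card = n - 1)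
    (hMdisj : ∀ a ∈ M, ∀ b ∈ M, a ≠ b → Disjoint (ends a) (ends b))
    (hMrainbow : ∀ a ∈ M, ∀ b ∈ M, a ≠ b → col a ≠ col b)
    (c₀ c : Fin n) (hc₀ : ∀ a ∈ M, col a ≠ c₀)
    (k : ℕ) (e m : ℕ → E)
    (hc_empty : k = 0 → c = c₀)
    (hc_last : 0 < k → c = col (m (k - 1)))
    (he0 : 0 < k → col (e 0) = c₀)
    -- (S1) `m_1, …, m_k` are distinct edges of `M`
    (hS1 : ∀ i < k, m i ∈ M)
    (hS1' : ∀ i < k, ∀ j < k, i ≠ j → m i ≠ m j)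
    -- (S2) each `e_i` has one endvertex in `m_{i+1}` and the other outside `V(M)`
    (hS2 : ∀ i < k, ∃ u v : V, ends (e i) = {u, v} ∧ u ∈ ends (m i) ∧
        ∀ a ∈ M, v ∉ ends a)
    -- (S3) `c(e_0) = c₀ ≠ c(m_i)` for all `i`, and `c(e_i) = c(m_i)` for `1 ≤ i ≤ k−1`
    (hS3 : ∀ i, 0 < i → i < k → col (e i) = col (m (i - 1)))
    -- (S4) the edges `e_0, …, e_{k−1}` are pairwise vertex-disjoint
    (hS4 : ∀ i < k, ∀ j < k, i ≠ j → Disjoint (ends (e i)) (ends (e j)))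
    (ed : E) (hedcol : col ed = c)
    (hedout : ∀ v ∈ ends ed,
      (∀ a ∈ M, v ∉ ends a) ∧ (∀ i < k, v ∉ ends (e i) ∧ v ∉ ends (m i))) :
    (((M \ (Finset.range k).image m) ∪ (Finset.range k).image e) ∪ {ed}).card = n ∧
    (∀ a ∈ ((M \ (Finset.range k).image m) ∪ (Finset.range k).image e) ∪ {ed},
      ∀ b ∈ ((M \ (Finset.range k).image m) ∪ (Finset.range k).image e) ∪ {ed},
        a ≠ b → Disjoint (ends a) (ends b) ∧ col a ≠ col b) := by
  classical
  have hne : ∀ a : E, (ends a).Nonempty := fun a =>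
    Finset.card_pos.mp (by rw [hends a]; norm_num)
  set Em := (Finset.range k).image m with hEmdef
  set Ee := (Finset.range k).image e with hEedef
  have hmEm : ∀ i < k, m i ∈ Em := fun i hi =>
    Finset.mem_image.mpr ⟨i, Finset.mem_range.mpr hi, rfl⟩
  -- colour of e i differs from colour of edges in M \ Em
  have hcol_eM : ∀ i < k, ∀ a ∈ M \ Em, col a ≠ col (e i) := by
    intro i hi a ha
    rw [Finset.mem_sdiff] at ha
    obtain ⟨haM, haEm⟩ := ha
    rcases Nat.eq_zero_or_pos i with h0 | h0
    · subst h0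
      rw [he0 (by omega)]
      exact hc₀ a haM
    · rw [hS3 i h0 hi]
      have hne' : a ≠ m (i-1) := fun h => haEm (h ▸ hmEm (i-1) (by omega))
      exact hMrainbow a haM (m (i-1)) (hS1 (i-1) (by omega)) hne'
  have hdisj_eM : ∀ i < k, ∀ a ∈ M \ Em, Disjoint (ends a) (ends (e i)) := by
    intro i hi a ha
    rw [Finset.mem_sdiff] at ha
    obtain ⟨haM, haEm⟩ := ha
    obtain ⟨u, v, huv, hu, hv⟩ := hS2 i hi
    rw [Finset.disjoint_right, huv]
    intro x hx
    rcases Finset.mem_insert.mp hx with h | h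
    · subst h
      have hne' : a ≠ m i := fun h => haEm (h ▸ hmEm i hi)
      exact fun hxa => Finset.disjoint_left.mp
        (hMdisj a haM (m i) (hS1 i hi) hne') hxa hu
    · rw [Finset.mem_singleton] at h
      subst h
      exact hv a haM
  have hcol_ee : ∀ i < k, ∀ j < k, i ≠ j → col (e i) ≠ col (e j) := by
    intro i hi j hj hij
    rcases Nat.eq_zero_or_pos i with h0i | h0i
    · subst h0i
      rw [he0 (by omega), hS3 j (by omega) hj]
      exact fun h => hc₀ (m (j-1)) (hS1 (j-1) (by omega)) h.symm
    · rcases Nat.eq_zero_or_pos j with h0j | h0j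
      · subst h0j
        rw [he0 (by omega), hS3 i h0i hi]
        exact hc₀ (m (i-1)) (hS1 (i-1) (by omega))
      · rw [hS3 i h0i hi, hS3 j h0j hj]
        exact hMrainbow _ (hS1 (i-1) (by omega)) _ (hS1 (j-1) (by omega))
          (hS1' (i-1) (by omega) (j-1) (by omega) (by omega))
  have hdisj_edM : ∀ a ∈ M, Disjoint (ends ed) (ends a) := by
    intro a ha
    rw [Finset.disjoint_left]
    intro x hx
    exact (hedout x hx).1 a ha
  have hdisj_ede : ∀ i < k, Disjoint (ends ed) (ends (e i)) := by
    intro i hi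
    rw [Finset.disjoint_left]
    intro x hx
    exact ((hedout x hx).2 i hi).1
  have hcol_edM : ∀ a ∈ M \ Em, col ed ≠ col a := by
    intro a ha
    rw [Finset.mem_sdiff] at ha
    obtain ⟨haM, haEm⟩ := ha
    rw [hedcol]
    rcases Nat.eq_zero_or_pos k with h0 | h0
    · rw [hc_empty h0]
      exact fun h => hc₀ a haM h.symm
    · rw [hc_last h0]
      have hne' : m (k-1) ≠ a := fun h => haEm (h ▸ hmEm (k-1) (by omega))
      exact hMrainbow _ (hS1 (k-1) (by omega)) a haM hne'
  have hcol_ede : ∀ i < k, col ed ≠ col (e i) := by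
    intro i hi
    have h0 : 0 < k := by omega
    rw [hedcol, hc_last h0]
    rcases Nat.eq_zero_or_pos i with h0i | h0i
    · subst h0i
      rw [he0 h0]
      exact hc₀ (m (k-1)) (hS1 (k-1) (by omega))
    · rw [hS3 i h0i hi]
      exact hMrainbow _ (hS1 (k-1) (by omega)) _ (hS1 (i-1) (by omega))
        (hS1' (k-1) (by omega) (i-1) (by omega) (by omega))
  obtain ⟨w, hw⟩ := hne ed
  have hednotin : ed ∉ (M \ Em ∪ Ee) := by
    intro h
    rcases Finset.mem_union.mp h with h | h
    · exact (hedout w hw).1 ed (Finset.mem_sdiff.mp h).1 hw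
    · obtain ⟨i, hi, hei⟩ := Finset.mem_image.mp h
      refine ((hedout w hw).2 i (Finset.mem_range.mp hi)).1 ?_
      rw [hei]; exact hw
  have hdisjsets : Disjoint (M \ Em) Ee := by
    rw [Finset.disjoint_right]
    intro a ha haM
    obtain ⟨i, hi, hei⟩ := Finset.mem_image.mp ha
    rw [Finset.mem_range] at hi
    subst hei
    rw [Finset.mem_sdiff] at haM
    obtain ⟨hM1, hM2⟩ := haM
    rcases Nat.eq_zero_or_pos i with h0 | h0
    · subst h0
      exact hc₀ _ hM1 (he0 (by omega))
    · exact hMrainbow _ hM1 _ (hS1 (i-1) (by omega))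
        (fun h => hM2 (h ▸ hmEm (i-1) (by omega))) (hS3 i h0 hi)
  have hEmcard : Em.card = k := by
    rw [hEmdef, Finset.card_image_of_injOn, Finset.card_range]
    intro i hi j hj h
    by_contra hij
    exact hS1' i (Finset.mem_range.mp hi) j (Finset.mem_range.mp hj) hij h
  have hEecard : Ee.card = k := by
    rw [hEedef, Finset.card_image_of_injOn, Finset.card_range]
    intro i hi j hj h
    by_contra hij
    have hd := hS4 i (Finset.mem_range.mp hi) j (Finset.mem_range.mp hj) hij
    rw [h] at hd
    exact (hne (e j)).ne_empty (by simpa using disjoint_self.mp hd)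
  have hEmsub : Em ⊆ M := by
    intro a ha
    obtain ⟨i, hi, hei⟩ := Finset.mem_image.mp ha
    exact hei ▸ hS1 i (Finset.mem_range.mp hi)
  have hkle : k ≤ n - 1 := by
    calc k = Em.card := hEmcard.symm
      _ ≤ M.card := Finset.card_le_card hEmsub
      _ = n - 1 := hMcard
  constructor
  · rw [Finset.card_union_of_disjoint (Finset.disjoint_singleton_right.mpr hednotin),
      Finset.card_union_of_disjoint hdisjsets,
      Finset.card_sdiff_of_subset hEmsub, hMcard, hEmcard, hEecard, Finset.card_singleton]
    omega
  · intro a ha b hb hab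
    simp only [Finset.mem_union, Finset.mem_singleton] at ha hb
    have memEe : ∀ x, x ∈ Ee → ∃ i, i < k ∧ e i = x := by
      intro x hx
      obtain ⟨i, hi, hei⟩ := Finset.mem_image.mp hx
      exact ⟨i, Finset.mem_range.mp hi, hei⟩
    rcases ha with (haM | haE) | haed
    · rcases hb with (hbM | hbE) | hbed
      · exact ⟨hMdisj a (Finset.mem_sdiff.mp haM).1 b (Finset.mem_sdiff.mp hbM).1 hab,
          hMrainbow a (Finset.mem_sdiff.mp haM).1 b (Finset.mem_sdiff.mp hbM).1 hab⟩
      · obtain ⟨i, hi, hei⟩ := memEe b hbE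
        subst hei
        exact ⟨hdisj_eM i hi a haM, hcol_eM i hi a haM⟩
      · subst hbed
        exact ⟨(hdisj_edM a (Finset.mem_sdiff.mp haM).1).symm, (hcol_edM a haM).symm⟩
    · obtain ⟨i, hi, hei⟩ := memEe a haE
      subst hei
      rcases hb with (hbM | hbE) | hbed
      · exact ⟨(hdisj_eM i hi b hbM).symm, (hcol_eM i hi b hbM).symm⟩
      · obtain ⟨j, hj, hej⟩ := memEe b hbE
        subst hej
        have hij : i ≠ j := fun h => hab (by rw [h])
        exact ⟨hS4 i hi j hj hij, hcol_ee i hi j hj hij⟩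
      · subst hbed
        exact ⟨(hdisj_ede i hi).symm, (hcol_ede i hi).symm⟩
    · subst haed
      rcases hb with (hbM | hbE) | hbed
      · exact ⟨hdisj_edM b (Finset.mem_sdiff.mp hbM).1, hcol_edM b hbM⟩
      · obtain ⟨i, hi, hei⟩ := memEe b hbE
        subst hei
        exact ⟨hdisj_ede i hi, hcol_ede i hi⟩
      · exact absurd hbed.symm hab
end
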